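/- arXiv:1512.05167 — 4 statements merged into one kernel-verified Lean document; each statement's English description precedes it below -/
import Mathlib

section
/- Let k be a field, let λ ∈ k, and let a₀, a₁, a₂ ∈ k satisfy a₀³ + a₁³ + a₂³ + λa₀a₁a₂ = 0. Then in k[X₀, X₁, X₂], the determinant of the Moore matrix M = [[a₀X₀, a₁X₂, a₂X₁], [a₁X₁, a₂X₀, a₀X₂], [a₂X₂, a₀X₁, a₁X₀]] equals a₀a₁a₂·(X₀³ + X₁³ + X₂³ + λX₀X₁X₂). In particular, if a₀a₁a₂ ≠ 0, then M is a linear determinantal representation over k of the Hesse cubic X₀³ + X₁³ + X₂³ + λX₀X₁X₂ = 0. -/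
open MvPolynomial

/-- `M` is a linear determinantal representation of the ternary form `f`: all entries of `M`
are homogeneous linear forms in `X₀, X₁, X₂` and `det M = c • f` for some nonzero scalar `c`. -/
def IsLDR {k : Type*} [Field k] (n : ℕ) (f : MvPolynomial (Fin 3) k)
    (M : Matrix (Fin n) (Fin n) (MvPolynomial (Fin 3) k)) : Prop :=
  (∀ i j, (M i j).IsHomogeneous 1) ∧ ∃ c : k, c ≠ 0 ∧ M.det = C c * f

/-- `f` admits a linear determinantal representation by an `n × n` matrix of linear forms. -/
def AdmitsLDR {k : Type*} [Field k] (n : ℕ) (f : MvPolynomial (Fin 3) k) : Prop :=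
  ∃ M, IsLDR n f M

/-- Two linear determinantal representations are equivalent if `M' = A * M * B` for some
invertible scalar matrices `A`, `B` over `k`. -/
def LDREquiv {k : Type*} [Field k] {n : ℕ}
    (M M' : Matrix (Fin n) (Fin n) (MvPolynomial (Fin 3) k)) : Prop :=
  ∃ A B : Matrix (Fin n) (Fin n) k, IsUnit A.det ∧ IsUnit B.det ∧
    M' = A.map C * M * B.map C

/-- `f` defines a smooth plane curve: `f ≠ 0` and, over an algebraic closure of `k`, the only
common zero of `f` and its three partial derivatives is the origin. -/
def DefinesSmoothPlaneCurve {k : Type*} [Field k] (f : MvPolynomial (Fin 3) k) : Prop :=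
  f ≠ 0 ∧ ∀ x : Fin 3 → AlgebraicClosure k,
    (eval x (map (algebraMap k (AlgebraicClosure k)) f) = 0 ∧
      ∀ i, eval x (pderiv i (map (algebraMap k (AlgebraicClosure k)) f)) = 0) → x = 0

/-- The Weierstrass plane cubic form `X₁²X₂ − X₀³ − aX₀X₂² − bX₂³`. -/
noncomputable def WCubic {k : Type*} [Field k] (a b : k) : MvPolynomial (Fin 3) k :=
  X 1 ^ 2 * X 2 - X 0 ^ 3 - C a * X 0 * X 2 ^ 2 - C b * X 2 ^ 3

section MooreMatrix

variable {R : Type*} [CommRing R]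

def mooreMatrix (a b c x y z : R) : Matrix (Fin 3) (Fin 3) R :=
  !![a * x, b * z, c * y;
     b * y, c * x, a * z;
     c * z, a * y, b * x]

theorem det_mooreMatrix (a b c x y z : R) :
    (mooreMatrix a b c x y z).det =
      a * b * c * (x ^ 3 + y ^ 3 + z ^ 3) - (a ^ 3 + b ^ 3 + c ^ 3) * x * y * z := by
  rw [mooreMatrix, Matrix.det_fin_three]
  simp only [Matrix.of_apply, Matrix.cons_val', Matrix.cons_val_zero, Matrix.cons_val_one,
    Matrix.cons_val_two, Matrix.empty_val', Matrix.cons_val_fin_one, Matrix.head_cons,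
    Matrix.tail_cons, Matrix.head_fin_const]
  ring

theorem det_mooreMatrix_of_hesse {lam a b c : R}
    (h : a ^ 3 + b ^ 3 + c ^ 3 + lam * a * b * c = 0) (x y z : R) :
    (mooreMatrix a b c x y z).det =
      a * b * c * (x ^ 3 + y ^ 3 + z ^ 3 + lam * x * y * z) := by
  rw [det_mooreMatrix]
  linear_combination (-(x * y * z)) * h

end MooreMatrix

/-- the Moore matrix of a point `(a₀ : a₁ : a₂)` on the Hesse cubic
`X₀³ + X₁³ + X₂³ + λX₀X₁X₂ = 0` has determinant `a₀a₁a₂ · (X₀³ + X₁³ + X₂³ + λX₀X₁X₂)`;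
in particular, if `a₀a₁a₂ ≠ 0`, it is a linear determinantal representation of the Hesse
cubic over `k`. -/
theorem stmt_1 {k : Type*} [Field k] (lam a0 a1 a2 : k)
    (h : a0 ^ 3 + a1 ^ 3 + a2 ^ 3 + lam * a0 * a1 * a2 = 0) :
    (!![C a0 * X 0, C a1 * X 2, C a2 * X 1;
        C a1 * X 1, C a2 * X 0, C a0 * X 2;
        C a2 * X 2, C a0 * X 1, C a1 * X 0] :
          Matrix (Fin 3) (Fin 3) (MvPolynomial (Fin 3) k)).det =
      C (a0 * a1 * a2) * (X 0 ^ 3 + X 1 ^ 3 + X 2 ^ 3 + C lam * X 0 * X 1 * X 2) ∧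
    (a0 * a1 * a2 ≠ 0 →
      IsLDR 3 (X 0 ^ 3 + X 1 ^ 3 + X 2 ^ 3 + C lam * X 0 * X 1 * X 2)
        !![C a0 * X 0, C a1 * X 2, C a2 * X 1;
           C a1 * X 1, C a2 * X 0, C a0 * X 2;
           C a2 * X 2, C a0 * X 1, C a1 * X 0]) := by
  have hC : C a0 ^ 3 + C a1 ^ 3 + C a2 ^ 3 + C lam * C a0 * C a1 * C a2 =
      (0 : MvPolynomial (Fin 3) k) := by
    simpa only [C_add, C_mul, C_pow, C_0] using congrArg C h
  have hdet := det_mooreMatrix_of_hesse hC (X 0) (X 1) (X 2)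
  rw [← C_mul, ← C_mul] at hdet
  refine ⟨hdet, fun hne => ⟨fun i j => ?_, a0 * a1 * a2, hne, hdet⟩⟩
  fin_cases i <;> fin_cases j <;> exact isHomogeneous_C_mul_X _ _
end

section
/- Let k be a field of characteristic different from 2 and 3, and let a, b ∈ k with 4a³ + 27b² ≠ 0. If the group of k-rational points of the elliptic curve y² = x³ + ax + b contains an element of infinite order, then the plane cubic form X₁²X₂ − X₀³ − aX₀X₂² − bX₂³ admits infinitely many pairwise inequivalent linear determinantal representations over k. -/
open MvPolynomial

/-!
To a point `Q = (p, q)` of `E : y² = x³ + ax + b` with `2Q ≠ 0` and tangent slope `l` attach an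
explicit linear determinantal representation of the cubic. Writing a linear matrix as
`X₀M₀ + X₁M₁ + X₂M₂`, an equivalence `M' = AMB` conjugates the pair `(M₁M₀⁻¹, M₂M₀⁻¹)`
simultaneously by `A`, so `tr((M₂M₀⁻¹)²(M₁M₀⁻¹)²)` is an invariant; for the matrix of `Q` it equals
`2p - l² = -x(2Q)`. Equivalent matrices of `Q` and `Q'` therefore force `2Q = ±2Q'`, and the
multiples `(n + 1)P` of a point `P` of infinite order give pairwise inequivalent representations.
-/

section TangentRepresentations

open Matrix

variable {k : Type*} [Field k]

noncomputable def tangentLDR (p q l : k) : Matrix (Fin 3) (Fin 3) (MvPolynomial (Fin 3) k) :=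
  !![X 1 + C q * X 2, 0, X 0 - C p * X 2;
     -X 0 - C (2 * p) * X 2, X 1 - C q * X 2, C l * X 2;
     -(C l * X 2), X 0 - C p * X 2, X 2]

theorem isLDR_tangentLDR {a b p q l : k} (hq : q ^ 2 = p ^ 3 + a * p + b)
    (hl : 2 * q * l = 3 * p ^ 2 + a) : IsLDR 3 (WCubic a b) (tangentLDR p q l) := by
  have hX (i : Fin 3) : (X i : MvPolynomial (Fin 3) k).IsHomogeneous 1 := isHomogeneous_X k i
  have hCX (c : k) (i : Fin 3) : (C c * X i : MvPolynomial (Fin 3) k).IsHomogeneous 1 :=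
    isHomogeneous_C_mul_X c i
  refine ⟨fun i j => ?_, 1, one_ne_zero, ?_⟩
  · fin_cases i <;> fin_cases j
    · exact (hX 1).add (hCX q 2)
    · exact isHomogeneous_zero _ _ _
    · exact (hX 0).sub (hCX p 2)
    · exact (hX 0).neg.sub (hCX (2 * p) 2)
    · exact (hX 1).sub (hCX q 2)
    · exact hCX l 2
    · exact (hCX l 2).neg
    · exact (hX 0).sub (hCX p 2)
    · exact hX 2
  · have hq' := congrArg (C (σ := Fin 3)) hq
    have hl' := congrArg (C (σ := Fin 3)) hl
    simp only [map_pow, map_add, map_mul, map_ofNat] at hq' hl'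
    rw [det_fin_three, C_1, one_mul]
    simp only [tangentLDR, WCubic, of_apply, cons_val', cons_val_zero, cons_val_fin_one,
      cons_val_one, cons_val, map_mul, map_ofNat]
    linear_combination -X 2 ^ 3 * hq' + (C p * X 2 ^ 3 - X 0 * X 2 ^ 2) * hl'

theorem Matrix.mul_mul_mul_inv_mul_mul {n R : Type*} [Fintype n] [DecidableEq n] [CommRing R]
    (A B X Y : Matrix n n R) (hB : IsUnit B.det) :
    A * Y * B * (A * X * B)⁻¹ = A * (Y * X⁻¹) * A⁻¹ := by
  simp only [Matrix.mul_inv_rev, Matrix.mul_assoc, mul_nonsing_inv_cancel_left _ _ hB]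

theorem LDREquiv.exists_map_eval_eq {n : ℕ}
    {M M' : Matrix (Fin n) (Fin n) (MvPolynomial (Fin 3) k)} (h : LDREquiv M M') :
    ∃ A B : Matrix (Fin n) (Fin n) k, IsUnit A.det ∧ IsUnit B.det ∧
      ∀ v, M'.map (eval v) = A * M.map (eval v) * B := by
  obtain ⟨A, B, hA, hB, rfl⟩ := h
  refine ⟨A, B, hA, hB, fun v => ?_⟩
  simp only [Matrix.map_mul, Matrix.map_map, Function.comp_def, eval_C, Matrix.map_id']

/-- `coeff i` is the coefficient matrix of `Xᵢ` when the entries of `M` are linear forms. -/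
noncomputable def ldrInvariant {n : ℕ} (M : Matrix (Fin n) (Fin n) (MvPolynomial (Fin 3) k)) :
    k :=
  let coeff (i : Fin 3) := M.map (eval (Pi.single i 1))
  trace ((coeff 2 * (coeff 0)⁻¹) ^ 2 * (coeff 1 * (coeff 0)⁻¹) ^ 2)

theorem LDREquiv.ldrInvariant_eq {n : ℕ}
    {M M' : Matrix (Fin n) (Fin n) (MvPolynomial (Fin 3) k)} (h : LDREquiv M M') :
    ldrInvariant M = ldrInvariant M' := by
  obtain ⟨A, B, hA, hB, hAB⟩ := h.exists_map_eval_eq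
  simp only [ldrInvariant, hAB, mul_mul_mul_inv_mul_mul _ _ _ _ hB]
  rw [← trace_conj ((isUnit_iff_isUnit_det A).mpr hA)]
  congr 1
  simp only [pow_two, Matrix.mul_assoc, nonsing_inv_mul_cancel_left _ _ hA]

theorem ldrInvariant_tangentLDR (p q l : k) :
    ldrInvariant (tangentLDR p q l) = 2 * p - l ^ 2 := by
  have hM₀ : (tangentLDR p q l).map (eval (Pi.single 0 1)) = !![0, 0, 1; -1, 0, 0; 0, 1, 0] := by
    ext i j; fin_cases i <;> fin_cases j <;> simp [tangentLDR]
  have hM₁ : (tangentLDR p q l).map (eval (Pi.single 1 1)) = !![1, 0, 0; 0, 1, 0; 0, 0, 0] := by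
    ext i j; fin_cases i <;> fin_cases j <;> simp [tangentLDR]
  have hM₂ : (tangentLDR p q l).map (eval (Pi.single 2 1)) =
      !![q, 0, -p; -(2 * p), -q, l; -l, -p, 1] := by
    ext i j; fin_cases i <;> fin_cases j <;> simp [tangentLDR]
  have hM₀_inv : (!![0, 0, 1; -1, 0, 0; 0, 1, 0] : Matrix (Fin 3) (Fin 3) k)⁻¹ =
      !![0, -1, 0; 0, 0, 1; 1, 0, 0] := by
    apply inv_eq_right_inv
    simp [← Matrix.one_fin_three]
  simp only [ldrInvariant, hM₀, hM₁, hM₂, hM₀_inv, pow_two, mul_fin_three, trace_fin_three,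
    of_apply, cons_val', cons_val_zero, cons_val_one, cons_val_two, empty_val', cons_val_fin_one,
    head_cons, tail_cons, head_fin_const]
  ring

theorem eq_of_nsmul_eq_or_eq_neg {G : Type*} [AddGroup G] {P : G} (hP : ¬IsOfFinAddOrder P)
    {m n : ℕ} (h : m • P = n • P ∨ m • P = -(n • P)) : m = n := by
  have hinj := injective_nsmul_iff_not_isOfFinAddOrder.mpr hP
  rcases h with h | h
  · exact hinj h
  · have hsum : (m + n) • P = 0 • P := by rw [add_nsmul, h, neg_add_cancel, zero_nsmul]
    have := hinj hsum
    omega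

namespace WeierstrassCurve

open WeierstrassCurve.Affine

variable {W : WeierstrassCurve k} [DecidableEq k]

theorem exists_eq_some_of_two_nsmul_ne_zero {R : W.toAffine.Point} (hR : 2 • R ≠ 0) :
    ∃ x y, ∃ h : W.toAffine.Nonsingular x y, R = .some x y h ∧ y ≠ W.toAffine.negY x y := by
  rcases R with _ | ⟨x, y, h⟩
  · exact absurd (nsmul_zero 2) hR
  · refine ⟨x, y, h, rfl, fun hy => hR ?_⟩
    rw [two_nsmul, Point.add_self_of_Y_eq hy]

variable [W.IsShortNF]

theorem slope_self_mul_two_mul {x y : k} (hy : y ≠ W.toAffine.negY x y) :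
    W.toAffine.slope x x y y * (2 * y) = 3 * x ^ 2 + W.a₄ := by
  have hneg : W.toAffine.negY x y = -y := by simp
  have h2y : 2 * y ≠ 0 := by simpa [hneg, two_mul] using sub_ne_zero.mpr hy
  rw [slope_of_Y_ne rfl hy, hneg, sub_neg_eq_add, ← two_mul, div_mul_cancel₀ _ h2y]
  simp

/-- Junk value `0` at the point at infinity. -/
noncomputable def tangentLDROfPoint :
    W.toAffine.Point → Matrix (Fin 3) (Fin 3) (MvPolynomial (Fin 3) k)
  | .zero => 0
  | .some x y _ => tangentLDR x y (W.toAffine.slope x x y y)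

theorem isLDR_tangentLDROfPoint {R : W.toAffine.Point} (hR : 2 • R ≠ 0) :
    IsLDR 3 (WCubic W.a₄ W.a₆) (tangentLDROfPoint R) := by
  obtain ⟨x, y, h, rfl, hy⟩ := exists_eq_some_of_two_nsmul_ne_zero hR
  refine isLDR_tangentLDR ?_ (by linear_combination slope_self_mul_two_mul hy)
  simpa [equation_iff, a₁_of_isShortNF, a₃_of_isShortNF] using h.1

theorem two_nsmul_eq_or_eq_neg_of_ldrEquiv {R S : W.toAffine.Point} (hR : 2 • R ≠ 0)
    (hS : 2 • S ≠ 0) (h : LDREquiv (tangentLDROfPoint R) (tangentLDROfPoint S)) :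
    2 • R = 2 • S ∨ 2 • R = -(2 • S : W.toAffine.Point) := by
  obtain ⟨x, y, hxy, rfl, hy⟩ := exists_eq_some_of_two_nsmul_ne_zero hR
  obtain ⟨x', y', hxy', rfl, hy'⟩ := exists_eq_some_of_two_nsmul_ne_zero hS
  have hinv := h.ldrInvariant_eq
  simp only [tangentLDROfPoint, ldrInvariant_tangentLDR] at hinv
  rw [two_nsmul, two_nsmul, Point.add_self_of_Y_ne hy, Point.add_self_of_Y_ne hy']
  refine Point.X_eq_iff.mp ?_
  simp only [addX, a₁_of_isShortNF, a₂_of_isShortNF]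
  linear_combination -hinv

end WeierstrassCurve

end TangentRepresentations

open scoped Classical in
theorem stmt_9_general {k : Type*} [Field k] (a b : k)
    (P : (WeierstrassCurve.mk 0 0 0 a b).toAffine.Point) (hP : ¬ IsOfFinAddOrder P) :
    ∃ M : ℕ → Matrix (Fin 3) (Fin 3) (MvPolynomial (Fin 3) k),
      (∀ n, IsLDR 3 (WCubic a b) (M n)) ∧ ∀ m n, m ≠ n → ¬ LDREquiv (M m) (M n) := by
  have : (WeierstrassCurve.mk 0 0 0 a b).IsShortNF := ⟨rfl, rfl, rfl⟩
  have hdouble (n : ℕ) : 2 • (n + 1) • P = (2 * (n + 1)) • P := smul_smul ..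
  have hne (n : ℕ) : 2 • (n + 1) • P ≠ 0 := fun h =>
    hP (isOfFinAddOrder_iff_nsmul_eq_zero.mpr ⟨2 * (n + 1), by positivity, by rwa [← hdouble]⟩)
  refine ⟨fun n => WeierstrassCurve.tangentLDROfPoint ((n + 1) • P),
    fun n => WeierstrassCurve.isLDR_tangentLDROfPoint (W := .mk 0 0 0 a b) (hne n),
    fun m n hmn h => hmn ?_⟩
  have hpm := WeierstrassCurve.two_nsmul_eq_or_eq_neg_of_ldrEquiv (W := .mk 0 0 0 a b)
    (hne m) (hne n) h
  rw [hdouble, hdouble] at hpm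
  have := eq_of_nsmul_eq_or_eq_neg hP hpm
  omega

open scoped Classical in
/-- over a field of characteristic different from 2 and 3, if the elliptic curve
`y² = x³ + ax + b` (with `4a³ + 27b² ≠ 0`) has a `k`-rational point of infinite order, then
the Weierstrass plane cubic `X₁²X₂ − X₀³ − aX₀X₂² − bX₂³` admits infinitely many pairwise
inequivalent linear determinantal representations over `k`. -/
theorem stmt_9 {k : Type*} [Field k] (h2 : (2 : k) ≠ 0) (h3 : (3 : k) ≠ 0) (a b : k)
    (hΔ : 4 * a ^ 3 + 27 * b ^ 2 ≠ 0)
    (P : (WeierstrassCurve.mk 0 0 0 a b).toAffine.Point) (hP : ¬ IsOfFinAddOrder P) :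
    ∃ M : ℕ → Matrix (Fin 3) (Fin 3) (MvPolynomial (Fin 3) k),
      (∀ n, IsLDR 3 (WCubic a b) (M n)) ∧ ∀ m n, m ≠ n → ¬ LDREquiv (M m) (M n) :=
  stmt_9_general a b P hP
end

section
/- Let A, B ∈ ℤ with 4A³ + 27B² ≠ 0, and suppose the elliptic curve E: y² = x³ + Ax + B has trivial Mordell–Weil group over ℚ, i.e., there are no λ, μ ∈ ℚ with μ² = λ³ + Aλ + B. Then the plane cubic X₁²X₂ − X₀³ − AX₀X₂² − BX₂³ fails the local-global principle for the existence of linear determinantal representations: it admits a linear determinantal representation over ℝ and over ℚ_p for every prime p, but it does not admit a linear determinantal representation over ℚ. -/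
open MvPolynomial

/-!
A rational point `(λ, μ)` of `y² = x³ + ax + b` yields an explicit `3 × 3` linear determinantal
representation of the Weierstrass cubic. Conversely, write a representation as a pencil
`x M₀ + y M₁ + z M₂` and normalise `M₀ = 1`. At `z = 0` the cubic is `x³`, so `N = M₁` is
nilpotent; the coefficient of `y²z` is `tr (N² M₂) = -1`, so `N² ≠ 0` and `N` is conjugate to the
nilpotent Jordan block `J`. In that basis, with `Q` the conjugate of `M₂`, an explicit covector
kills `x • 1 + y • J + Q` at an explicit `(x, y)`, which is therefore a point of the curve.
Over `ℝ` and `ℚ_p` the curve has points (take `x` large, resp. `x = p⁻²` and `y` from Hensel's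
lemma), while over `ℚ` it has none by hypothesis.
-/

theorem eq_zero_of_forall_cubic_eq_zero {K : Type*} [CommRing K] [IsDomain K] [Infinite K]
    {c₀ c₁ c₂ c₃ : K} (h : ∀ t, c₀ + c₁ * t + c₂ * t ^ 2 + c₃ * t ^ 3 = 0) :
    c₀ = 0 ∧ c₁ = 0 ∧ c₂ = 0 ∧ c₃ = 0 := by
  have hp : Polynomial.C c₀ + Polynomial.C c₁ * Polynomial.X + Polynomial.C c₂ * Polynomial.X ^ 2
      + Polynomial.C c₃ * Polynomial.X ^ 3 = 0 :=
    Polynomial.funext fun t => by simpa using h t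
  refine ⟨?_, ?_, ?_, ?_⟩
  · simpa using congrArg (Polynomial.coeff · 0) hp
  · simpa [Polynomial.coeff_X] using congrArg (Polynomial.coeff · 1) hp
  · simpa [Polynomial.coeff_X] using congrArg (Polynomial.coeff · 2) hp
  · simpa [Polynomial.coeff_X] using congrArg (Polynomial.coeff · 3) hp

theorem MvPolynomial.IsHomogeneous.eq_sum_C_coeff_mul_X {σ R : Type*} [CommSemiring R]
    [Fintype σ] {φ : MvPolynomial σ R} (hφ : φ.IsHomogeneous 1) :
    φ = ∑ i, C (coeff (Finsupp.single i 1) φ) * X i := by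
  classical
  ext d
  simp only [coeff_sum, coeff_C_mul, coeff_X]
  by_cases hd : d.degree = 1
  · obtain ⟨a, rfl⟩ := (Finsupp.sum_eq_one_iff d).mp hd
    simp [Finsupp.single_eq_single_iff]
  · rw [hφ.coeff_eq_zero hd, eq_comm]
    refine Finset.sum_eq_zero fun i _ => ?_
    split_ifs with h
    · subst h; simp at hd
    · simp

namespace Matrix

theorem map_eval_eq_sum_smul {σ R n : Type*} [CommSemiring R] [Fintype σ]
    {M : Matrix n n (MvPolynomial σ R)} (hM : ∀ i j, (M i j).IsHomogeneous 1) (v : σ → R) :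
    M.map (eval v) = ∑ k, v k • of fun i j => coeff (Finsupp.single k 1) (M i j) := by
  ext i j
  rw [map_apply, (hM i j).eq_sum_C_coeff_mul_X]
  simp [Matrix.sum_apply, mul_comm]

section CommRing

variable {R : Type*} [CommRing R]

theorem det_add_smul_fin_three (A B : Matrix (Fin 3) (Fin 3) R) (t : R) :
    det (A + t • B) = det A + t * trace (adjugate A * B) + t ^ 2 * trace (A * adjugate B)
      + t ^ 3 * det B := by
  simp only [det_fin_three, adjugate_fin_three, trace_fin_three, mul_apply, Fin.sum_univ_three,
    add_apply, smul_apply, smul_eq_mul, of_apply, cons_val', cons_val_zero, cons_val_one,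
    cons_val_two, empty_val', cons_val_fin_one, head_cons, tail_cons, head_fin_const]
  ring

theorem adjugate_fin_three_eq (A : Matrix (Fin 3) (Fin 3) R) :
    adjugate A = A * A - trace A • A + trace (adjugate A) • 1 := by
  ext i j
  fin_cases i <;> fin_cases j <;>
    simp [adjugate_fin_three, trace_fin_three, mul_apply, Fin.sum_univ_three] <;> ring

theorem adjugate_eq_mul_self_and_det_eq_zero_of_forall_det_one_add_smul [IsDomain R] [Infinite R]
    {N : Matrix (Fin 3) (Fin 3) R} (h : ∀ t : R, det (1 + t • N) = 1) :
    adjugate N = N * N ∧ det N = 0 := by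
  obtain ⟨-, htr, htrAdj, hdet⟩ := eq_zero_of_forall_cubic_eq_zero (c₀ := 0)
    (c₁ := trace N) (c₂ := trace (adjugate N)) (c₃ := det N) fun t => by
      have ht := h t
      rw [det_add_smul_fin_three, det_one, adjugate_one, one_mul, one_mul] at ht
      linear_combination ht
  refine ⟨?_, hdet⟩
  rw [adjugate_fin_three_eq, htr, htrAdj]
  simp

end CommRing

section Field

variable {K : Type*} [Field K]

def nilJordan (K : Type*) [Zero K] [One K] : Matrix (Fin 3) (Fin 3) K :=
  !![0, 1, 0; 0, 0, 1; 0, 0, 0]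

theorem exists_isUnit_mul_eq_mul_nilJordan {N : Matrix (Fin 3) (Fin 3) K}
    (hN3 : N * N * N = 0) (hN2 : N * N ≠ 0) :
    ∃ S : Matrix (Fin 3) (Fin 3) K, IsUnit S ∧ N * S = S * nilJordan K := by
  obtain ⟨v, hv⟩ : ∃ v, (N * N) *ᵥ v ≠ 0 := by
    by_contra! h
    exact hN2 (ext_of_mulVec_single fun j => by rw [h, zero_mulVec])
  set w := (N * N) *ᵥ v with hw
  have hNw : N *ᵥ w = 0 := by rw [hw, mulVec_mulVec, ← mul_assoc, hN3, zero_mulVec]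
  have hNNv : N *ᵥ (N *ᵥ v) = w := by rw [hw, mulVec_mulVec]
  let S : Matrix (Fin 3) (Fin 3) K := (of ![w, N *ᵥ v, v])ᵀ
  refine ⟨S, linearIndependent_cols_iff_isUnit.mp ?_, ?_⟩
  · rw [Fintype.linearIndependent_iff]
    intro g hg
    replace hg : g 0 • w + g 1 • N *ᵥ v + g 2 • v = 0 := by
      simp only [S, col, transpose_transpose, Fin.sum_univ_three] at hg
      exact hg
    have h1 : g 1 • w + g 2 • N *ᵥ v = 0 := by
      simpa [mulVec_add, mulVec_smul, hNw, hNNv] using congrArg (N *ᵥ ·) hg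
    have h2 : g 2 • w = 0 := by
      simpa [mulVec_add, mulVec_smul, hNw, hNNv] using congrArg (N *ᵥ ·) h1
    have g2 : g 2 = 0 := (smul_eq_zero.mp h2).resolve_right hv
    have g1 : g 1 = 0 := (smul_eq_zero.mp (by simpa [g2] using h1)).resolve_right hv
    have g0 : g 0 = 0 := (smul_eq_zero.mp (by simpa [g1, g2] using hg)).resolve_right hv
    intro i
    fin_cases i <;> assumption
  · ext i j
    have h0 := congrFun hNw i
    have h1 := congrFun hNNv i
    fin_cases j <;> simp [S, nilJordan, mul_apply, Fin.sum_univ_three, mulVec, dotProduct] at h0 h1 ⊢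
    · exact h0
    · exact h1

theorem trace_nilJordan_mul_nilJordan_mul (Q : Matrix (Fin 3) (Fin 3) K) :
    trace (nilJordan K * nilJordan K * Q) = Q 2 0 := by
  simp [nilJordan, trace_fin_three, vecMul, dotProduct, Fin.sum_univ_three]

theorem exists_det_pencil_nilJordan_eq_zero {Q : Matrix (Fin 3) (Fin 3) K} (hQ : Q 2 0 = -1) :
    ∃ x y : K, det (x • 1 + y • nilJordan K + Q) = 0 := by
  refine ⟨-(Q 1 1 + Q 1 0 * Q 2 1), -(Q 1 2 + Q 1 0 * (-(Q 1 1 + Q 1 0 * Q 2 1) + Q 2 2)), ?_⟩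
  refine exists_vecMul_eq_zero_iff.mp ⟨![0, 1, Q 1 0], by simp, ?_⟩
  ext j
  fin_cases j <;> simp [vecMul, dotProduct, Fin.sum_univ_three, nilJordan, hQ]

end Field

end Matrix

open Matrix in
theorem exists_sq_eq_cube_of_det_pencil {K : Type*} [Field K] [Infinite K] {a b : K}
    {N P : Matrix (Fin 3) (Fin 3) K}
    (h : ∀ x y z : K, det (x • 1 + y • N + z • P) = x ^ 3 + a * x * z ^ 2 + b * z ^ 3 - y ^ 2 * z) :
    ∃ x y : K, y ^ 2 = x ^ 3 + a * x + b := by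
  obtain ⟨hadj, hdet⟩ :=
    adjugate_eq_mul_self_and_det_eq_zero_of_forall_det_one_add_smul fun t => by simpa using h 1 t 0
  have hN3 : N * N * N = 0 := by rw [mul_assoc, ← hadj, mul_adjugate, hdet, zero_smul]
  obtain ⟨-, htrNNP, -, -⟩ := eq_zero_of_forall_cubic_eq_zero (c₀ := 0)
    (c₁ := trace (N * N * P) + 1) (c₂ := trace (N * adjugate P)) (c₃ := det P - b) fun z => by
      have hz := h 0 1 z
      rw [zero_smul, zero_add, one_smul, det_add_smul_fin_three, hadj, hdet] at hz
      linear_combination (norm := ring_nf) hz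
  have hN2 : N * N ≠ 0 := fun hN2 => by
    rw [hN2, zero_mul, trace_zero, zero_add] at htrNNP
    exact one_ne_zero htrNNP
  obtain ⟨S, hS, hNS⟩ := exists_isUnit_mul_eq_mul_nilJordan hN3 hN2
  have hSdet := (isUnit_iff_isUnit_det S).mp hS
  have hJ : nilJordan K = S⁻¹ * N * S := by
    rw [mul_assoc, hNS, nonsing_inv_mul_cancel_left _ _ hSdet]
  obtain ⟨x, y, hxy⟩ := exists_det_pencil_nilJordan_eq_zero (Q := S⁻¹ * P * S) (by
    have hconj : S⁻¹ * N * S * (S⁻¹ * N * S) * (S⁻¹ * P * S) = S⁻¹ * (N * N * P) * S := by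
      simp only [mul_assoc, mul_nonsing_inv_cancel_left _ _ hSdet]
    rw [← trace_nilJordan_mul_nilJordan_mul (S⁻¹ * P * S), hJ, hconj, trace_conj' hS]
    linear_combination htrNNP)
  refine ⟨x, y, ?_⟩
  have hconj : S⁻¹ * (x • 1 + y • N + (1 : K) • P) * S = x • 1 + y • nilJordan K + S⁻¹ * P * S := by
    rw [hJ]
    simp only [Matrix.mul_add, Matrix.add_mul, Matrix.mul_smul, Matrix.smul_mul, Matrix.mul_one,
      one_smul, nonsing_inv_mul _ hSdet, mul_assoc]
  have hpt := h x y 1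
  rw [← det_conj' hS, hconj, hxy] at hpt
  linear_combination hpt

section WCubic

variable {K : Type*} [Field K]

theorem map_WCubic {L : Type*} [Field L] (f : K →+* L) (a b : K) :
    map f (WCubic a b) = WCubic (f a) (f b) := by
  simp [WCubic]

theorem admitsLDR_WCubic_of_sq_eq_cube {a b x y : K} (h : y ^ 2 = x ^ 3 + a * x + b) :
    AdmitsLDR 3 (WCubic a b) := by
  refine ⟨!![0, X 1 - C y * X 2, X 0 - C x * X 2;
            -X 0, C (x ^ 2 + a) * X 2, X 1 + C y * X 2;
            X 2, X 0 + C x * X 2, 0], ?_, 1, one_ne_zero, ?_⟩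
  · have hCX : ∀ (r : K) (i : Fin 3), (C r * X i : MvPolynomial (Fin 3) K).IsHomogeneous 1 :=
      fun r i => (isHomogeneous_C _ r).mul (isHomogeneous_X K i)
    intro i j
    fin_cases i <;> fin_cases j <;> simp only [Matrix.of_apply, Matrix.cons_val', Matrix.cons_val_zero,
      Matrix.cons_val_one, Matrix.cons_val_two, Matrix.empty_val', Matrix.cons_val_fin_one,
      Matrix.head_cons, Matrix.tail_cons, Fin.mk_one, Fin.reduceFinMk]
    all_goals first
      | exact isHomogeneous_zero _ _ _
      | exact isHomogeneous_X K _
      | exact (isHomogeneous_X K _).neg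
      | exact hCX _ _
      | exact (isHomogeneous_X K _).sub (hCX _ _)
      | exact (isHomogeneous_X K _).add (hCX _ _)
  · have hC : (C y : MvPolynomial (Fin 3) K) ^ 2 = C x ^ 3 + C a * C x + C b := by
      simpa using congrArg (C : K →+* MvPolynomial (Fin 3) K) h
    rw [Matrix.det_fin_three, WCubic, map_one, one_mul, C_add, C_pow]
    simp only [Matrix.of_apply, Matrix.cons_val', Matrix.cons_val_zero, Matrix.cons_val_one,
      Matrix.cons_val_two, Matrix.empty_val', Matrix.cons_val_fin_one, Matrix.head_cons,
      Matrix.tail_cons, Matrix.head_fin_const]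
    linear_combination -(X 2 : MvPolynomial (Fin 3) K) ^ 3 * hC

open Matrix in
theorem exists_sq_eq_cube_of_admitsLDR_WCubic [Infinite K] {a b : K}
    (h : AdmitsLDR 3 (WCubic a b)) : ∃ x y : K, y ^ 2 = x ^ 3 + a * x + b := by
  obtain ⟨M, hlin, c, hc, hdet⟩ := h
  let L : Fin 3 → Matrix (Fin 3) (Fin 3) K := fun k => of fun i j => coeff (Finsupp.single k 1) (M i j)
  have hpencil : ∀ x y z : K, det (x • L 0 + y • L 1 + z • L 2)
      = c * (y ^ 2 * z - x ^ 3 - a * x * z ^ 2 - b * z ^ 3) := by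
    intro x y z
    have hM : M.map (eval ![x, y, z]) = x • L 0 + y • L 1 + z • L 2 := by
      rw [map_eval_eq_sum_smul hlin, Fin.sum_univ_three]
      rfl
    rw [← hM, ← RingHom.mapMatrix_apply, ← RingHom.map_det, hdet]
    simp [WCubic]
  have hL0 : det (L 0) = -c := by simpa using hpencil 1 0 0
  have hunit : IsUnit (det (L 0)) := by rw [hL0]; exact (neg_ne_zero.mpr hc).isUnit
  refine exists_sq_eq_cube_of_det_pencil (N := (L 0)⁻¹ * L 1) (P := (L 0)⁻¹ * L 2) fun x y z => ?_
  calc det (x • 1 + y • ((L 0)⁻¹ * L 1) + z • ((L 0)⁻¹ * L 2))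
      = det ((L 0)⁻¹ * (x • L 0 + y • L 1 + z • L 2)) := by
        rw [Matrix.mul_add, Matrix.mul_add, Matrix.mul_smul, Matrix.mul_smul, Matrix.mul_smul,
          nonsing_inv_mul _ hunit]
    _ = x ^ 3 + a * x * z ^ 2 + b * z ^ 3 - y ^ 2 * z := by
        rw [det_mul, det_nonsing_inv, hpencil, hL0, Ring.inverse_eq_inv]
        field_simp
        ring

theorem admitsLDR_WCubic_iff [Infinite K] {a b : K} :
    AdmitsLDR 3 (WCubic a b) ↔ ∃ x y : K, y ^ 2 = x ^ 3 + a * x + b :=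
  ⟨exists_sq_eq_cube_of_admitsLDR_WCubic, fun ⟨_, _, h⟩ => admitsLDR_WCubic_of_sq_eq_cube h⟩

end WCubic

theorem Real.exists_sq_eq_cube_add (a b : ℝ) : ∃ x y : ℝ, y ^ 2 = x ^ 3 + a * x + b := by
  set x := 1 + |a| + |b|
  have hx : 0 ≤ x ^ 3 + a * x + b := by
    nlinarith [neg_abs_le a, neg_abs_le b, abs_nonneg a, abs_nonneg b, sq_nonneg x]
  exact ⟨x, √(x ^ 3 + a * x + b), Real.sq_sqrt hx⟩

theorem PadicInt.exists_sq_eq_of_norm_sub_one_lt {p : ℕ} [Fact p.Prime] {u : ℤ_[p]}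
    (hu : ‖u - 1‖ < ‖(2 : ℤ_[p])‖ ^ 2) : ∃ z : ℤ_[p], z ^ 2 = u := by
  obtain ⟨z, hz, -⟩ := hensels_lemma (F := Polynomial.X ^ 2 - Polynomial.C u) (a := (1 : ℤ_[p]))
    (by simpa [norm_sub_rev, one_add_one_eq_two] using hu)
  exact ⟨z, by simpa [sub_eq_zero] using hz⟩

theorem PadicInt.inv_sq_lt_norm_two (p : ℕ) [hp : Fact p.Prime] :
    ((p : ℝ)⁻¹) ^ 2 < ‖(2 : ℤ_[p])‖ := by
  have hndvd : ¬ (p ^ 2 : ℤ) ∣ 2 := fun h => by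
    have := Int.le_of_dvd two_pos h
    have : (2 : ℤ) ≤ p := by exact_mod_cast hp.out.two_le
    nlinarith
  have := mt (PadicInt.norm_int_le_pow_iff_dvd (p := p) (k := 2) (n := 2)).mp hndvd
  simpa [zpow_neg, not_le] using this

theorem Padic.exists_sq_eq_cube_add (p : ℕ) [Fact p.Prime] (a b : ℤ_[p]) :
    ∃ x y : ℚ_[p], y ^ 2 = x ^ 3 + a * x + b := by
  have hp : (p : ℚ_[p]) ≠ 0 := by exact_mod_cast (Fact.out : p.Prime).ne_zero
  obtain ⟨z, hz⟩ := PadicInt.exists_sq_eq_of_norm_sub_one_lt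
    (u := 1 + a * (p : ℤ_[p]) ^ 4 + b * (p : ℤ_[p]) ^ 6) (by
    calc ‖1 + a * (p : ℤ_[p]) ^ 4 + b * p ^ 6 - 1‖ = ‖(p : ℤ_[p]) ^ 4 * (a + b * p ^ 2)‖ := by
          ring_nf
      _ ≤ ((p : ℝ)⁻¹) ^ 4 := by
        rw [norm_mul, norm_pow, PadicInt.norm_p]
        exact mul_le_of_le_one_right (by positivity) (PadicInt.norm_le_one _)
      _ = (((p : ℝ)⁻¹) ^ 2) ^ 2 := by ring
      _ < ‖(2 : ℤ_[p])‖ ^ 2 := by gcongr; exact PadicInt.inv_sq_lt_norm_two p)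
  refine ⟨(p : ℚ_[p])⁻¹ ^ 2, (z : ℚ_[p]) * (p : ℚ_[p])⁻¹ ^ 3, ?_⟩
  have hz' : (z : ℚ_[p]) ^ 2 = 1 + a * p ^ 4 + b * p ^ 6 := by
    exact_mod_cast congrArg ((↑) : ℤ_[p] → ℚ_[p]) hz
  field_simp
  linear_combination hz'

theorem stmt_10_general (A B : ℤ)
    (htriv : ¬ ∃ lam mu : ℚ, mu ^ 2 = lam ^ 3 + (A : ℚ) * lam + (B : ℚ)) :
    AdmitsLDR 3 (map (algebraMap ℚ ℝ) (WCubic (A : ℚ) (B : ℚ))) ∧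
    (∀ (p : ℕ) [Fact p.Prime], AdmitsLDR 3 (map (algebraMap ℚ ℚ_[p]) (WCubic (A : ℚ) (B : ℚ)))) ∧
    ¬ AdmitsLDR 3 (WCubic (A : ℚ) (B : ℚ)) := by
  refine ⟨?_, fun p _ => ?_, admitsLDR_WCubic_iff.not.mpr htriv⟩
  · rw [map_WCubic, admitsLDR_WCubic_iff]
    simpa using Real.exists_sq_eq_cube_add A B
  · rw [map_WCubic, admitsLDR_WCubic_iff]
    simpa using Padic.exists_sq_eq_cube_add p A B

/-- if the elliptic curve `y² = x³ + Ax + B` (`A, B ∈ ℤ`, `4A³ + 27B² ≠ 0`) has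
trivial Mordell–Weil group over `ℚ`, then the plane cubic `X₁²X₂ − X₀³ − AX₀X₂² − BX₂³` fails
the local-global principle for the existence of linear determinantal representations: it admits
one over `ℝ` and over every `ℚ_p`, but not over `ℚ`. -/
theorem stmt_10 (A B : ℤ) (hΔ : 4 * A ^ 3 + 27 * B ^ 2 ≠ 0)
    (htriv : ¬ ∃ lam mu : ℚ, mu ^ 2 = lam ^ 3 + (A : ℚ) * lam + (B : ℚ)) :
    AdmitsLDR 3 (map (algebraMap ℚ ℝ) (WCubic (A : ℚ) (B : ℚ))) ∧
    (∀ (p : ℕ) [Fact p.Prime], AdmitsLDR 3 (map (algebraMap ℚ ℚ_[p]) (WCubic (A : ℚ) (B : ℚ)))) ∧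
    ¬ AdmitsLDR 3 (WCubic (A : ℚ) (B : ℚ)) :=
  stmt_10_general A B htriv
end

section
/- Let k be an infinite field and let f ∈ k[X₀, X₁, X₂] be a homogeneous cubic form defining a smooth plane cubic. Then there exists a finite separable field extension L of k of degree 1 or 3 such that the cubic has an L-rational point, i.e., there is a nonzero vector x ∈ L³ on which the image of f in L[X₀, X₁, X₂] vanishes. -/
/-!
If `f` has a `k`-rational point, take `L = k`. Otherwise `f` has no nontrivial zero over `k`.
Smoothness forces some `∂ᵢf` to be a nonzero polynomial: `f` has a nontrivial zero over `k̄`,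
which would otherwise be singular. As `k` is infinite, there is a `p` off the `i`-th coordinate
axis with `∂ᵢf(p) ≠ 0`. On the line `p + t eᵢ`, `f` restricts to a cubic in `t` with leading
coefficient `f(eᵢ) ≠ 0`; it has no root in `k`, hence is irreducible, and its derivative at
`t = 0` is `∂ᵢf(p) ≠ 0`, hence it is separable. Adjoining one of its roots gives a separable
cubic extension `L` together with an `L`-point on the line.
-/

open MvPolynomial

namespace Polynomial

variable {R ι : Type*} [CommSemiring R]

theorem natDegree_le_and_coeff_prod_pow_linear (a b : ι → R) (s : Finset ι) (m : ι → ℕ) :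
    (∏ j ∈ s, (C (a j) * X + C (b j)) ^ m j).natDegree ≤ ∑ j ∈ s, m j ∧
      (∏ j ∈ s, (C (a j) * X + C (b j)) ^ m j).coeff (∑ j ∈ s, m j) =
        ∏ j ∈ s, a j ^ m j := by
  classical
  induction s using Finset.induction_on with
  | empty => simp
  | insert c s hc ih =>
    have hpow : ((C (a c) * X + C (b c)) ^ m c).natDegree ≤ m c :=
      (natDegree_pow_le_of_le _ natDegree_linear_le).trans_eq (mul_one _)
    have hcoeff := coeff_pow_of_natDegree_le (m := m c) (natDegree_linear_le (a := a c) (b := b c))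
    simp only [mul_one, coeff_add, coeff_C_mul_X, coeff_C, if_true, one_ne_zero, if_false,
      add_zero] at hcoeff
    rw [Finset.prod_insert hc, Finset.sum_insert hc, Finset.prod_insert hc]
    refine ⟨natDegree_mul_le_of_le hpow ih.1, ?_⟩
    rw [coeff_mul_add_eq_of_natDegree_le hpow ih.1, ih.2, hcoeff]

end Polynomial

namespace MvPolynomial

section RestrictToLine

variable {R σ : Type*} [CommSemiring R]

noncomputable def restrictToLine (p q : σ → R) : MvPolynomial σ R →ₐ[R] Polynomial R :=
  aeval fun j => Polynomial.C (q j) * Polynomial.X + Polynomial.C (p j)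

variable (p q : σ → R) (f : MvPolynomial σ R)

@[simp]
theorem restrictToLine_X (j : σ) :
    restrictToLine p q (X j) = Polynomial.C (q j) * Polynomial.X + Polynomial.C (p j) :=
  aeval_X _ _

theorem aeval_restrictToLine {S : Type*} [CommSemiring S] [Algebra R S] (t : S) :
    Polynomial.aeval t (restrictToLine p q f) =
      aeval (fun j => algebraMap R S (q j) * t + algebraMap R S (p j)) f := by
  rw [restrictToLine, ← AlgHom.comp_apply, comp_aeval]
  simp

theorem eval_restrictToLine (r : R) :
    (restrictToLine p q f).eval r = eval (fun j => q j * r + p j) f := by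
  simpa using aeval_restrictToLine p q f r

theorem derivative_restrictToLine [Fintype σ] :
    Polynomial.derivative (restrictToLine p q f) =
      restrictToLine p q (∑ l, C (q l) * pderiv l f) := by
  classical
  induction f using MvPolynomial.induction_on with
  | C a => simp [restrictToLine]
  | add f g hf hg => simp only [map_add, hf, hg, mul_add, Finset.sum_add_distrib]
  | mul_X f i hf =>
    have hsum : ∑ l, C (q l) * pderiv l (f * X i) =
        (∑ l, C (q l) * pderiv l f) * X i + C (q i) * f := by
      simp only [Derivation.leibniz, pderiv_X, Pi.single_apply, smul_eq_mul, mul_add,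
        Finset.sum_add_distrib, Finset.sum_mul, mul_ite, mul_one, mul_zero, Finset.sum_ite_eq,
        Finset.mem_univ, if_true]
      rw [add_comm]
      exact congrArg (· + _) (Finset.sum_congr rfl fun _ _ => by ring)
    rw [hsum, map_mul, Polynomial.derivative_mul, hf]
    simp only [map_add, map_mul, algHom_C, Polynomial.algebraMap_eq, restrictToLine_X,
      Polynomial.derivative_mul, Polynomial.derivative_C,
      Polynomial.derivative_X, zero_mul, mul_one, zero_add, add_zero]
    ring

variable {p q f} {n : ℕ}

theorem IsHomogeneous.natDegree_restrictToLine_le_and_coeff (hf : f.IsHomogeneous n) :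
    (restrictToLine p q f).natDegree ≤ n ∧ (restrictToLine p q f).coeff n = eval q f := by
  classical
  have hsum : restrictToLine p q f =
      ∑ d ∈ f.support, restrictToLine p q (monomial d (coeff d f)) := by
    conv_lhs => rw [f.as_sum]
    exact map_sum _ _ _
  rw [hsum, Polynomial.finsetSum_coeff, eval_eq]
  have hmonomial : ∀ d ∈ f.support,
      (restrictToLine p q (monomial d (coeff d f))).natDegree ≤ n ∧
        (restrictToLine p q (monomial d (coeff d f))).coeff n =
          coeff d f * ∏ j ∈ d.support, q j ^ d j := by
    intro d hd
    have hdeg : ∑ j ∈ d.support, d j = n := by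
      simpa [Finsupp.weight_apply, Finsupp.sum] using hf (mem_support_iff.mp hd)
    obtain ⟨hle, hcoeff⟩ := Polynomial.natDegree_le_and_coeff_prod_pow_linear q p d.support d
    rw [hdeg] at hle hcoeff
    rw [restrictToLine, aeval_monomial, Polynomial.algebraMap_eq, Finsupp.prod]
    exact ⟨(Polynomial.natDegree_C_mul_le _ _).trans hle,
      by rw [Polynomial.coeff_C_mul, hcoeff]⟩
  exact ⟨Polynomial.natDegree_sum_le_of_forall_le _ _ fun d hd => (hmonomial d hd).1,
    Finset.sum_congr rfl fun d hd => (hmonomial d hd).2⟩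

theorem IsHomogeneous.natDegree_restrictToLine (hf : f.IsHomogeneous n) (hq : eval q f ≠ 0) :
    (restrictToLine p q f).natDegree = n := by
  obtain ⟨hle, hcoeff⟩ := hf.natDegree_restrictToLine_le_and_coeff (p := p) (q := q)
  exact hle.antisymm (Polynomial.le_natDegree_of_ne_zero (hcoeff ▸ hq))

end RestrictToLine

theorem exists_eval_ne_zero {R σ : Type*} [CommRing R] [IsDomain R] [Infinite R]
    {f : MvPolynomial σ R} (hf : f ≠ 0) : ∃ x, eval x f ≠ 0 := by
  by_contra! h
  exact hf (MvPolynomial.funext fun x => by simp [h x])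

theorem IsHomogeneous.exists_eval_eq_zero_of_isAlgClosed {K σ : Type*} [Field K] [IsAlgClosed K]
    [Nontrivial σ] {f : MvPolynomial σ K} {n : ℕ} (hf : f.IsHomogeneous n) (hn : n ≠ 0) :
    ∃ x : σ → K, x ≠ 0 ∧ eval x f = 0 := by
  classical
  obtain ⟨i, j, hij⟩ := exists_pair_ne σ
  by_cases hj : eval (Pi.single j 1) f = 0
  · exact ⟨Pi.single j 1, by simp, hj⟩
  set G := restrictToLine (Pi.single i 1) (Pi.single j 1) f
  have hG : G.degree ≠ 0 := fun h => hn <| by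
    rw [← hf.natDegree_restrictToLine hj,
      Polynomial.natDegree_eq_zero_iff_degree_le_zero.mpr h.le]
  obtain ⟨z, hz⟩ := IsAlgClosed.exists_root G hG
  refine ⟨fun l => (Pi.single j 1 : σ → K) l * z + (Pi.single i 1 : σ → K) l,
    fun h => ?_, ?_⟩
  · simpa [hij] using congrFun h i
  · rwa [← eval_restrictToLine]

section Field

variable {k σ : Type*} [Field k] {f : MvPolynomial σ k} {p q : σ → k}

theorem IsHomogeneous.irreducible_restrictToLine {n : ℕ} (hf : f.IsHomogeneous n)
    (hn₂ : 2 ≤ n) (hn₃ : n ≤ 3) (hf₀ : ∀ x, x ≠ 0 → eval x f ≠ 0) (hq : q ≠ 0)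
    (hline : ∀ r : k, (fun j => q j * r + p j) ≠ 0) : Irreducible (restrictToLine p q f) := by
  have hdeg := hf.natDegree_restrictToLine (p := p) (hf₀ q hq)
  rw [Polynomial.irreducible_iff_roots_eq_zero_of_degree_le_three (by omega) (by omega),
    Multiset.eq_zero_iff_forall_notMem]
  intro r hr
  have := Polynomial.isRoot_of_mem_roots hr
  rw [Polynomial.IsRoot, eval_restrictToLine] at this
  exact hf₀ _ (hline r) this

theorem separable_restrictToLine [Fintype σ] (hirr : Irreducible (restrictToLine p q f))
    (hder : eval p (∑ l, C (q l) * pderiv l f) ≠ 0) : (restrictToLine p q f).Separable := by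
  refine (Polynomial.separable_iff_derivative_ne_zero hirr).mpr fun h => hder ?_
  have := congrArg (Polynomial.eval 0) h
  rw [derivative_restrictToLine, eval_restrictToLine, Polynomial.eval_zero] at this
  simpa using this

end Field

end MvPolynomial

theorem DefinesSmoothPlaneCurve.exists_pderiv_ne_zero {k : Type*} [Field k]
    {f : MvPolynomial (Fin 3) k} {n : ℕ} (hsm : DefinesSmoothPlaneCurve f)
    (hf : f.IsHomogeneous n) (hn : n ≠ 0) : ∃ i, pderiv i f ≠ 0 := by
  by_contra! h
  obtain ⟨x, hx0, hx⟩ :=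
    (hf.map (algebraMap k (AlgebraicClosure k))).exists_eval_eq_zero_of_isAlgClosed hn
  exact hx0 (hsm.2 x ⟨hx, fun i => by rw [pderiv_map, h i, map_zero, map_zero]⟩)

theorem Polynomial.Separable.exists_intermediateField_aeval_eq_zero {k : Type*} [Field k]
    {G : Polynomial k} (hsep : G.Separable) (hirr : Irreducible G) :
    ∃ L : IntermediateField k (AlgebraicClosure k), Algebra.IsSeparable k L ∧
      Module.finrank k L = G.natDegree ∧ ∃ t : L, Polynomial.aeval t G = 0 := by
  obtain ⟨θ, hθ⟩ := IsAlgClosed.exists_aeval_eq_zero (AlgebraicClosure k) G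
    (Polynomial.degree_pos_of_irreducible hirr).ne'
  have hG : G = Polynomial.C G.leadingCoeff * minpoly k θ :=
    minpoly.Irreducible.eq_minpoly hirr hθ
  refine ⟨IntermediateField.adjoin k {θ}, ?_, ?_, IntermediateField.AdjoinSimple.gen k θ, ?_⟩
  · exact (IntermediateField.isSeparable_adjoin_simple_iff_isSeparable k _).mpr
      (hsep.of_dvd (minpoly.dvd k θ hθ))
  · rw [IntermediateField.adjoin.finrank (Algebra.IsIntegral.isIntegral θ), hG,
      Polynomial.natDegree_C_mul (Polynomial.leadingCoeff_ne_zero.mpr hirr.ne_zero)]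
  · rw [hG, map_mul, IntermediateField.aeval_gen_minpoly, mul_zero]

/-- a smooth plane cubic over an infinite field `k` has an `L`-rational point
for some finite separable field extension `L/k` of degree 1 or 3 (realized inside an
algebraic closure of `k`). -/
theorem stmt_12 {k : Type*} [Field k] [Infinite k] (f : MvPolynomial (Fin 3) k)
    (hdeg : f.IsHomogeneous 3) (hsm : DefinesSmoothPlaneCurve f) :
    ∃ L : IntermediateField k (AlgebraicClosure k),
      Algebra.IsSeparable k L ∧
      (Module.finrank k L = 1 ∨ Module.finrank k L = 3) ∧
      ∃ x : Fin 3 → L, x ≠ 0 ∧ eval x (map (algebraMap k L) f) = 0 := by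
  by_cases hpt : ∃ x : Fin 3 → k, x ≠ 0 ∧ eval x f = 0
  · obtain ⟨x, hx₀, hx⟩ := hpt
    refine ⟨⊥, IntermediateField.isSeparable_bot _ _, Or.inl IntermediateField.finrank_bot,
      algebraMap k _ ∘ x, fun h => hx₀ (funext fun l => by simpa using congrFun h l), ?_⟩
    rw [← map_eval, hx, map_zero]
  push Not at hpt
  obtain ⟨i, hi⟩ := hsm.exists_pderiv_ne_zero hdeg three_ne_zero
  obtain ⟨j, hji⟩ := exists_ne i
  obtain ⟨p, hp⟩ := exists_eval_ne_zero (mul_ne_zero (X_ne_zero j) hi)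
  rw [eval_mul, eval_X, mul_ne_zero_iff] at hp
  have hirr := hdeg.irreducible_restrictToLine (by norm_num) le_rfl hpt (q := Pi.single i 1)
    (by simp) fun r h => hp.1 (by simpa [hji] using congrFun h j)
  have hsep := separable_restrictToLine hirr (by simpa [Pi.single_apply] using hp.2)
  obtain ⟨L, hLsep, hLdeg, t, ht⟩ := hsep.exists_intermediateField_aeval_eq_zero hirr
  refine ⟨L, hLsep, Or.inr (hLdeg.trans (hdeg.natDegree_restrictToLine (hpt _ (by simp)))),
    fun l => algebraMap k L ((Pi.single i 1 : Fin 3 → k) l) * t + algebraMap k L (p l), ?_, ?_⟩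
  · exact fun h => hp.1 (by simpa [hji] using congrFun h j)
  · rwa [eval_map, ← aeval_def, ← aeval_restrictToLine]
end
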